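/- arXiv:1202.1209 — 2 statements merged into one kernel-verified Lean document; each statement's English description precedes it below -/
import Mathlib

section
/- The set C is convex. Precisely: if (Rc,R1) and (Rc',R1') both belong to C, then for every λ ∈ [0,1] the pair (λRc+(1−λ)Rc', λR1+(1−λ)R1') also belongs to C. -/
open scoped BigOperators

noncomputable section

/-- Shannon mutual information `I(A;B)` of a joint pmf `p` on finite alphabets
(the conventions for vanishing probabilities are handled by `Real.log 0 = 0`
and division by zero being zero). -/
def mi {A B : Type} [Fintype A] [Fintype B] (p : A → B → ℝ) : ℝ :=
  ∑ a, ∑ b, p a b * Real.log (p a b / ((∑ b', p a b') * (∑ a', p a' b)))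

/-- Conditional mutual information `I(A;B|C)` of a joint pmf `p` on finite alphabets. -/
def cmi {A B C : Type} [Fintype A] [Fintype B] [Fintype C] (p : A → B → C → ℝ) : ℝ :=
  ∑ a, ∑ b, ∑ c, p a b c *
    Real.log (((∑ a', ∑ b', p a' b' c) * p a b c) /
      ((∑ b', p a b' c) * (∑ a', p a' b c)))

/-- A two-user state-dependent discrete memoryless multiple access channel:
a state pmf `Q` on the finite state alphabet `S` and a channel transition
pmf `W y|x1,x2,s` with finite input alphabets `X1`, `X2` and output alphabet `Y`. -/
structure DMMAC (S X1 X2 Y : Type) [Fintype S] [Fintype X1] [Fintype X2] [Fintype Y] where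
  Q : S → ℝ
  W : X1 → X2 → S → Y → ℝ
  Q_nonneg : ∀ s, 0 ≤ Q s
  Q_sum : ∑ s, Q s = 1
  W_nonneg : ∀ x1 x2 s y, 0 ≤ W x1 x2 s y
  W_sum : ∀ x1 x2 s, ∑ y, W x1 x2 s y = 1

variable {S X1 X2 Y : Type} [Fintype S] [Fintype X1] [Fintype X2] [Fintype Y]

/-- An element of the class 𝒫: auxiliary finite alphabets `U`, `V` together with a joint
distribution of `(S,U,V,X₁,X₂,Y)` factorizing as
`Q_S(s)·P(x₂)·P(v|s,x₂)·P(u,x₁|s,v,x₂)·W(y|x₁,x₂,s)`. -/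
structure AuxP (ch : DMMAC S X1 X2 Y) where
  U : Type
  V : Type
  [fU : Fintype U]
  [fV : Fintype V]
  pX2 : X2 → ℝ
  pV : S → X2 → V → ℝ
  pUX1 : S → V → X2 → U → X1 → ℝ
  pX2_nonneg : ∀ x2, 0 ≤ pX2 x2
  pX2_sum : ∑ x2, pX2 x2 = 1
  pV_nonneg : ∀ s x2 v, 0 ≤ pV s x2 v
  pV_sum : ∀ s x2, ∑ v, pV s x2 v = 1
  pUX1_nonneg : ∀ s v x2 u x1, 0 ≤ pUX1 s v x2 u x1
  pUX1_sum : ∀ s v x2, ∑ u, ∑ x1, pUX1 s v x2 u x1 = 1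

attribute [instance] AuxP.fU AuxP.fV

namespace AuxP

variable {ch : DMMAC S X1 X2 Y}

/-- The joint pmf of `(S,U,V,X₁,X₂,Y)` induced by an element of 𝒫. -/
def joint (d : AuxP ch) (s : S) (u : d.U) (v : d.V) (x1 : X1) (x2 : X2) (y : Y) : ℝ :=
  ch.Q s * d.pX2 x2 * d.pV s x2 v * d.pUX1 s v x2 u x1 * ch.W x1 x2 s y

/-- `I(U;Y|V,X₂)` -/
def iUY_VX2 (d : AuxP ch) : ℝ :=
  cmi (fun (u : d.U) (y : Y) (c : d.V × X2) => ∑ s, ∑ x1, d.joint s u c.1 x1 c.2 y)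

/-- `I(U;S|V,X₂)` -/
def iUS_VX2 (d : AuxP ch) : ℝ :=
  cmi (fun (u : d.U) (s : S) (c : d.V × X2) => ∑ x1, ∑ y, d.joint s u c.1 x1 c.2 y)

/-- `I(U,V,X₂;Y)` -/
def iUVX2Y (d : AuxP ch) : ℝ :=
  mi (fun (a : d.U × d.V × X2) (y : Y) => ∑ s, ∑ x1, d.joint s a.1 a.2.1 x1 a.2.2 y)

/-- `I(U,V,X₂;S)` -/
def iUVX2S (d : AuxP ch) : ℝ :=
  mi (fun (a : d.U × d.V × X2) (s : S) => ∑ x1, ∑ y, d.joint s a.1 a.2.1 x1 a.2.2 y)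

/-- `I(V,X₂;Y)` -/
def iVX2Y (d : AuxP ch) : ℝ :=
  mi (fun (b : d.V × X2) (y : Y) => ∑ s, ∑ u, ∑ x1, d.joint s u b.1 x1 b.2 y)

/-- `I(V,X₂;S)` -/
def iVX2S (d : AuxP ch) : ℝ :=
  mi (fun (b : d.V × X2) (s : S) => ∑ u, ∑ x1, ∑ y, d.joint s u b.1 x1 b.2 y)

/-- `I(X₂;Y)` -/
def iX2Y (d : AuxP ch) : ℝ :=
  mi (fun (x2 : X2) (y : Y) => ∑ s, ∑ u, ∑ v, ∑ x1, d.joint s u v x1 x2 y)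

/-- `I(V;S|X₂)` -/
def iVS_X2 (d : AuxP ch) : ℝ :=
  cmi (fun (v : d.V) (s : S) (x2 : X2) => ∑ u, ∑ x1, ∑ y, d.joint s u v x1 x2 y)

/-- `I(U,V;Y|X₂)` -/
def iUVY_X2 (d : AuxP ch) : ℝ :=
  cmi (fun (a : d.U × d.V) (y : Y) (x2 : X2) => ∑ s, ∑ x1, d.joint s a.1 a.2 x1 x2 y)

end AuxP

/-- The region 𝒞. -/
def regionC (ch : DMMAC S X1 X2 Y) : Set (ℝ × ℝ) :=
  {r | 0 ≤ r.1 ∧ 0 ≤ r.2 ∧ ∃ d : AuxP ch,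
    r.2 ≤ d.iUY_VX2 - d.iUS_VX2 ∧ r.1 + r.2 ≤ d.iUVX2Y - d.iUVX2S}

/-- Average probability of error of a code `(φ1, φ2, ψ)`: Encoder 1 knows the whole state
sequence non-causally, Encoder 2 knows it strictly causally, messages are uniform and
independent, states are i.i.d. `Q` and the channel is memoryless. -/
def Perr (ch : DMMAC S X1 X2 Y) {n Mc M1 : ℕ}
    (φ1 : Fin Mc → Fin M1 → (Fin n → S) → (Fin n → X1))
    (φ2 : Fin Mc → (i : Fin n) → (Fin i.val → S) → X2)
    (ψ : (Fin n → Y) → Fin Mc × Fin M1) : ℝ :=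
  (1 / ((Mc : ℝ) * (M1 : ℝ))) *
    ∑ wc : Fin Mc, ∑ w1 : Fin M1, ∑ s : Fin n → S, ∑ y : Fin n → Y,
      ((∏ i : Fin n, ch.Q (s i)) *
        ∏ i : Fin n,
          ch.W (φ1 wc w1 s i) (φ2 wc i (fun j => s ⟨j.1, j.2.trans i.2⟩)) (s i) (y i)) *
      (if ψ y = (wc, w1) then 0 else 1)

/-- A rate pair `(Rc, R1)` is achievable if for every `ε > 0` there is an
`(Mc, M1, n, ε)` code with `Mc ≥ 2^{nRc}` and `M1 ≥ 2^{nR1}`. -/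
def Achievable (ch : DMMAC S X1 X2 Y) (Rc R1 : ℝ) : Prop :=
  0 ≤ Rc ∧ 0 ≤ R1 ∧
  ∀ ε : ℝ, 0 < ε →
    ∃ (n Mc M1 : ℕ) (φ1 : Fin Mc → Fin M1 → (Fin n → S) → (Fin n → X1))
      (φ2 : Fin Mc → (i : Fin n) → (Fin i.val → S) → X2)
      (ψ : (Fin n → Y) → Fin Mc × Fin M1),
      0 < n ∧ (2 : ℝ) ^ ((n : ℝ) * Rc) ≤ (Mc : ℝ) ∧ (2 : ℝ) ^ ((n : ℝ) * R1) ≤ (M1 : ℝ) ∧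
      Perr ch φ1 φ2 ψ ≤ ε

/-- The capacity region: the closure of the set of achievable rate pairs. -/
def capacityRegion (ch : DMMAC S X1 X2 Y) : Set (ℝ × ℝ) :=
  closure {r : ℝ × ℝ | Achievable ch r.1 r.2}

/-! Time sharing. Given witnesses `d`, `d'` for the two rate pairs, run `d` with probability `λ`
and `d'` otherwise, on the disjoint unions `U ⊕ U'`, `V ⊕ V'` of the auxiliary alphabets, so that
the coin `T` is a function of `V`. Then `I(U;Y|V,X₂)` and `I(U;S|V,X₂)` are the `λ`-averages of
the two codes' values; so is `I(U,V,X₂;S)`, because `S ~ Q` under both; and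
`I(U,V,X₂;Y) = I(T;Y) + average ≥ average`. Since `X₂` must stay independent of `S` while its law
becomes the `λ`-mixture, the coin's posterior given `X₂` is absorbed into `P(v|s,x₂)`. -/

lemma mul_mul_log_div_mul_left (l x r c : ℝ) :
    l * x * Real.log (l * x / (l * r * c)) = l * (x * Real.log (x / (r * c))) := by
  rcases eq_or_ne l 0 with rfl | hl
  · simp
  · rw [mul_assoc l r, mul_div_mul_left _ _ hl, mul_assoc]

lemma mul_mul_log_mul_div_mul_left (l x m r c : ℝ) :
    l * x * Real.log (l * m * (l * x) / (l * r * (l * c))) =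
      l * (x * Real.log (m * x / (r * c))) := by
  rcases eq_or_ne l 0 with rfl | hl
  · simp
  · rw [mul_mul_mul_comm, mul_mul_mul_comm l r, mul_div_mul_left _ _ (mul_ne_zero hl hl),
      mul_assoc]

lemma sub_le_mul_log_div {x y : ℝ} (hx : 0 ≤ x) (hy : 0 ≤ y) (hxy : 0 < x → 0 < y) :
    x - y ≤ x * Real.log (x / y) := by
  rcases hx.eq_or_lt with rfl | hx
  · simpa using hy
  have key := Real.one_sub_inv_le_log_of_pos (div_pos hx (hxy hx))
  rw [inv_div] at key
  calc x - y = x * (1 - y / x) := by field_simp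
    _ ≤ x * Real.log (x / y) := mul_le_mul_of_nonneg_left key hx.le

lemma mul_log_div_mul_split {x r c m : ℝ} (hx : 0 ≤ x) (hr : x ≤ r) (hc : x ≤ c)
    (hm : 0 < x → 0 < m) :
    x * Real.log (x / (r * m)) = x * Real.log (x / (r * c)) + x * Real.log (c / m) := by
  rcases hx.eq_or_lt with rfl | hx
  · simp
  have hr := hx.trans_le hr
  have hc := hx.trans_le hc
  have hm := hm hx
  rw [← mul_add, ← Real.log_mul (by positivity) (by positivity)]
  congr 2
  field_simp

lemma mul_log_div_mix_nonneg {l c c' : ℝ} (hl0 : 0 ≤ l) (hl1 : l ≤ 1) (hc : 0 ≤ c)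
    (hc' : 0 ≤ c') :
    0 ≤ l * (c * Real.log (c / (l * c + (1 - l) * c'))) +
      (1 - l) * (c' * Real.log (c' / (l * c + (1 - l) * c'))) := by
  set m := l * c + (1 - l) * c'
  have hm : 0 ≤ m := by positivity
  have h : l * (c - m) + (1 - l) * (c' - m) = 0 := by ring
  have key : ∀ {w x : ℝ}, 0 ≤ w → 0 ≤ x → (0 < w → 0 < x → 0 < m) →
      w * (x - m) ≤ w * (x * Real.log (x / m)) := fun hw hx hxm => by
    rcases hw.eq_or_lt with rfl | hw
    · simp
    exact mul_le_mul_of_nonneg_left (sub_le_mul_log_div hx hm (hxm hw)) hw.le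
  have h1 := key hl0 hc fun hl hc => by positivity
  have h2 := key (sub_nonneg.2 hl1) hc' fun hl hc' => by positivity
  linarith

section
variable {A A' B C C' K U U' V V' X Z : Type} [Fintype A] [Fintype A'] [Fintype B] [Fintype C]
  [Fintype C'] [Fintype K] [Fintype U] [Fintype U'] [Fintype V] [Fintype V'] [Fintype X]
  [Fintype Z]

lemma mi_comp_of_injective (q : K → B → ℝ) {e : A → K} (he : Function.Injective e)
    (hq : ∀ k ∉ Set.range e, ∀ b, q k b = 0) : mi (fun a b => q (e a) b) = mi q := by
  have hcol : ∀ b, ∑ a, q (e a) b = ∑ k, q k b := fun b =>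
    Fintype.sum_of_injective e he _ _ (fun k hk => hq k hk b) fun _ => rfl
  unfold mi
  simp only [hcol]
  exact Fintype.sum_of_injective e he _ _
    (fun k hk => Finset.sum_eq_zero fun b _ => by simp [hq k hk b]) fun _ => rfl

lemma cmi_comp_equiv (p : A → B → K → ℝ) (σ : C ≃ K) :
    cmi (fun a b c => p a b (σ c)) = cmi p := by
  unfold cmi
  exact Finset.sum_congr rfl fun a _ => Finset.sum_congr rfl fun b _ =>
    σ.sum_comp (fun k => p a b k * Real.log (((∑ a', ∑ b', p a' b' k) * p a b k) /
      ((∑ b', p a b' k) * (∑ a', p a' b k))))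

lemma sum_sum_mul_log_div_scaled {w : ℝ} (hw : 0 ≤ w) {r : A → B → ℝ} (hr : ∀ a b, 0 ≤ r a b)
    {m : B → ℝ} (hm : ∀ a b, 0 < w → 0 < r a b → 0 < m b) :
    ∑ a, ∑ b, w * r a b * Real.log (w * r a b / ((∑ b', w * r a b') * m b)) =
      w * mi r + w * ∑ b, (∑ a, r a b) * Real.log ((∑ a, r a b) / m b) := by
  have split : ∀ a b, w * r a b * Real.log (w * r a b / ((∑ b', w * r a b') * m b)) =
      w * (r a b * Real.log (r a b / ((∑ b', r a b') * ∑ a', r a' b))) +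
        w * (r a b * Real.log ((∑ a', r a' b) / m b)) := fun a b => by
    rw [← Finset.mul_sum, mul_mul_log_div_mul_left, ← mul_add]
    rcases hw.eq_or_lt with rfl | hw
    · simp
    rw [mul_log_div_mul_split (hr a b)
      (Finset.single_le_sum (fun b _ => hr a b) (Finset.mem_univ b))
      (Finset.single_le_sum (fun a _ => hr a b) (Finset.mem_univ a)) (hm a b hw)]
  simp only [split, Finset.sum_add_distrib]
  congr 1
  · simp only [mi, Finset.mul_sum]
  · rw [Finset.sum_comm, Finset.mul_sum]
    exact Finset.sum_congr rfl fun b _ => by rw [Finset.sum_mul, Finset.mul_sum]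

/-- The chain rule `I(A,T;B) = I(A;B|T) + I(T;B)` for the summand index `T`: the last sum is
`I(T;B)`. -/
lemma mi_sum_eq_add {l : ℝ} (hl0 : 0 ≤ l) (hl1 : l ≤ 1) {p : A → B → ℝ} {p' : A' → B → ℝ}
    (hp : ∀ a b, 0 ≤ p a b) (hp' : ∀ a b, 0 ≤ p' a b) {q : A ⊕ A' → B → ℝ}
    (hq : ∀ a b, q (.inl a) b = l * p a b) (hq' : ∀ a b, q (.inr a) b = (1 - l) * p' a b) :
    mi q = l * mi p + (1 - l) * mi p' +
      ∑ b, (l * ((∑ a, p a b) *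
          Real.log ((∑ a, p a b) / (l * ∑ a, p a b + (1 - l) * ∑ a, p' a b))) +
        (1 - l) * ((∑ a, p' a b) *
          Real.log ((∑ a, p' a b) / (l * ∑ a, p a b + (1 - l) * ∑ a, p' a b)))) := by
  have hcol : ∀ b, ∑ k, q k b = l * ∑ a, p a b + (1 - l) * ∑ a, p' a b := fun b => by
    simp only [Fintype.sum_sum_type, hq, hq', ← Finset.mul_sum]
  have hc : ∀ a b, p a b ≤ ∑ a, p a b := fun a b =>
    Finset.single_le_sum (fun a _ => hp a b) (Finset.mem_univ a)
  have hc' : ∀ a b, p' a b ≤ ∑ a, p' a b := fun a b =>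
    Finset.single_le_sum (fun a _ => hp' a b) (Finset.mem_univ a)
  conv_lhs => unfold mi
  rw [Fintype.sum_sum_type]
  simp only [hq, hq', hcol]
  rw [sum_sum_mul_log_div_scaled hl0 hp fun a b hl hpab =>
      add_pos_of_pos_of_nonneg (mul_pos hl (hpab.trans_le (hc a b)))
        (mul_nonneg (sub_nonneg.2 hl1) (Finset.sum_nonneg fun a _ => hp' a b)),
    sum_sum_mul_log_div_scaled (sub_nonneg.2 hl1) hp' fun a b hl hpab =>
      add_pos_of_nonneg_of_pos (mul_nonneg hl0 (Finset.sum_nonneg fun a _ => hp a b))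
        (mul_pos hl (hpab.trans_le (hc' a b)))]
  rw [Finset.sum_add_distrib, Finset.mul_sum, Finset.mul_sum]
  ring

lemma le_mi_sum {l : ℝ} (hl0 : 0 ≤ l) (hl1 : l ≤ 1) {p : A → B → ℝ} {p' : A' → B → ℝ}
    (hp : ∀ a b, 0 ≤ p a b) (hp' : ∀ a b, 0 ≤ p' a b) {q : A ⊕ A' → B → ℝ}
    (hq : ∀ a b, q (.inl a) b = l * p a b) (hq' : ∀ a b, q (.inr a) b = (1 - l) * p' a b) :
    l * mi p + (1 - l) * mi p' ≤ mi q := by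
  rw [mi_sum_eq_add hl0 hl1 hp hp' hq hq', le_add_iff_nonneg_right]
  exact Finset.sum_nonneg fun b _ => mul_log_div_mix_nonneg hl0 hl1
    (Finset.sum_nonneg fun a _ => hp a b) (Finset.sum_nonneg fun a _ => hp' a b)

lemma mi_sum_eq_of_sum_eq {l : ℝ} (hl0 : 0 ≤ l) (hl1 : l ≤ 1) {p : A → B → ℝ}
    {p' : A' → B → ℝ} (hp : ∀ a b, 0 ≤ p a b) (hp' : ∀ a b, 0 ≤ p' a b)
    (hpp' : ∀ b, ∑ a, p a b = ∑ a, p' a b) {q : A ⊕ A' → B → ℝ}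
    (hq : ∀ a b, q (.inl a) b = l * p a b) (hq' : ∀ a b, q (.inr a) b = (1 - l) * p' a b) :
    mi q = l * mi p + (1 - l) * mi p' := by
  rw [mi_sum_eq_add hl0 hl1 hp hp' hq hq', add_eq_left]
  refine Finset.sum_eq_zero fun b _ => ?_
  rw [← hpp', ← add_mul, add_sub_cancel, one_mul, ← add_mul, add_sub_cancel, one_mul,
    Real.log_div_self, mul_zero]

lemma cmi_sum_block {l : ℝ} {p : A → B → C → ℝ} {p' : A' → B → C' → ℝ}
    {q : A ⊕ A' → B → C ⊕ C' → ℝ}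
    (hq : ∀ a b c, q (.inl a) b (.inl c) = l * p a b c)
    (hq' : ∀ a b c, q (.inr a) b (.inr c) = (1 - l) * p' a b c)
    (hlr : ∀ a b c, q (.inl a) b (.inr c) = 0) (hrl : ∀ a b c, q (.inr a) b (.inl c) = 0) :
    cmi q = l * cmi p + (1 - l) * cmi p' := by
  conv_lhs => unfold cmi
  simp only [Fintype.sum_sum_type, hq, hq', hlr, hrl, zero_mul, Finset.sum_const_zero, add_zero,
    zero_add, ← Finset.mul_sum, mul_mul_log_mul_div_mul_left, cmi]

lemma cmi_sum_prod_block {l : ℝ} {F : U ⊕ U' → Z → (V ⊕ V') × X → ℝ}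
    {f : U → Z → V × X → ℝ} {f' : U' → Z → V' × X → ℝ}
    (hll : ∀ u z v x, F (.inl u) z (.inl v, x) = l * f u z (v, x))
    (hrr : ∀ u z v x, F (.inr u) z (.inr v, x) = (1 - l) * f' u z (v, x))
    (hlr : ∀ u z v x, F (.inl u) z (.inr v, x) = 0)
    (hrl : ∀ u z v x, F (.inr u) z (.inl v, x) = 0) :
    cmi F = l * cmi f + (1 - l) * cmi f' := by
  rw [← cmi_comp_equiv F (Equiv.sumProdDistrib V V' X).symm]
  exact cmi_sum_block (by simp [hll]) (by simp [hrr]) (by simp [hlr]) (by simp [hrl])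

lemma mi_prod_sum_eq_mi_sum (G : (U ⊕ U') × (V ⊕ V') × X → Z → ℝ)
    (hlr : ∀ u v x z, G (.inl u, .inr v, x) z = 0)
    (hrl : ∀ u v x z, G (.inr u, .inl v, x) z = 0) :
    mi G = mi (fun (k : U × V × X ⊕ U' × V' × X) z =>
      G (Sum.elim (Prod.map .inl (Prod.map .inl id)) (Prod.map .inr (Prod.map .inr id)) k) z) := by
  refine (mi_comp_of_injective G ?_ ?_).symm
  · exact (Sum.inl_injective.prodMap (Sum.inl_injective.prodMap Function.injective_id)).sumElim
      (Sum.inr_injective.prodMap (Sum.inr_injective.prodMap Function.injective_id))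
      fun _ _ h => Sum.inl_ne_inr (congrArg Prod.fst h)
  · rintro ⟨u | u, v | v, x⟩ hk z
    · exact absurd ⟨.inl (u, v, x), rfl⟩ hk
    · exact hlr u v x z
    · exact hrl u v x z
    · exact absurd ⟨.inr (u, v, x), rfl⟩ hk

end

namespace AuxP
variable {ch : DMMAC S X1 X2 Y}

lemma joint_nonneg (d : AuxP ch) (s : S) (u : d.U) (v : d.V) (x1 : X1) (x2 : X2) (y : Y) :
    0 ≤ d.joint s u v x1 x2 y :=
  mul_nonneg (mul_nonneg (mul_nonneg (mul_nonneg (ch.Q_nonneg s) (d.pX2_nonneg x2))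
    (d.pV_nonneg s x2 v)) (d.pUX1_nonneg s v x2 u x1)) (ch.W_nonneg x1 x2 s y)

lemma sum_joint_eq_Q (d : AuxP ch) (s : S) :
    ∑ a : d.U × d.V × X2, ∑ x1, ∑ y, d.joint s a.1 a.2.1 x1 a.2.2 y = ch.Q s := by
  simp only [Fintype.sum_prod_type, joint, ← Finset.mul_sum, ch.W_sum, mul_one]
  rw [Finset.sum_comm]
  simp only [Finset.sum_comm (γ := d.U) (α := X2)]
  simp only [← Finset.mul_sum, d.pUX1_sum, mul_one]
  rw [Finset.sum_comm]
  simp only [← Finset.mul_sum, d.pV_sum, mul_one, d.pX2_sum]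

variable {d d' : AuxP ch} {l : ℝ}

/-- The posterior probability, given `X₂ = x₂`, that the time-sharing coin chose `d`. Where the
mixed law of `X₂` vanishes, the junk value `0 / 0 = 0` is harmless: both joints vanish there. -/
def timeShareWeight (d d' : AuxP ch) (l : ℝ) (x2 : X2) : ℝ :=
  l * d.pX2 x2 / (l * d.pX2 x2 + (1 - l) * d'.pX2 x2)

lemma timeShareWeight_nonneg (hl0 : 0 ≤ l) (hl1 : l ≤ 1) (x2 : X2) :
    0 ≤ timeShareWeight d d' l x2 :=
  div_nonneg (mul_nonneg hl0 (d.pX2_nonneg x2))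
    (add_nonneg (mul_nonneg hl0 (d.pX2_nonneg x2))
      (mul_nonneg (sub_nonneg.2 hl1) (d'.pX2_nonneg x2)))

lemma timeShareWeight_le_one (hl0 : 0 ≤ l) (hl1 : l ≤ 1) (x2 : X2) :
    timeShareWeight d d' l x2 ≤ 1 :=
  div_le_one_of_le₀ (le_add_of_nonneg_right (mul_nonneg (sub_nonneg.2 hl1) (d'.pX2_nonneg x2)))
    (add_nonneg (mul_nonneg hl0 (d.pX2_nonneg x2))
      (mul_nonneg (sub_nonneg.2 hl1) (d'.pX2_nonneg x2)))

lemma mul_timeShareWeight (hl0 : 0 ≤ l) (hl1 : l ≤ 1) (x2 : X2) :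
    (l * d.pX2 x2 + (1 - l) * d'.pX2 x2) * timeShareWeight d d' l x2 = l * d.pX2 x2 :=
  mul_div_cancel_of_imp' fun h => by
    have := mul_nonneg hl0 (d.pX2_nonneg x2)
    have := mul_nonneg (sub_nonneg.2 hl1) (d'.pX2_nonneg x2)
    linarith

lemma mul_one_sub_timeShareWeight (hl0 : 0 ≤ l) (hl1 : l ≤ 1) (x2 : X2) :
    (l * d.pX2 x2 + (1 - l) * d'.pX2 x2) * (1 - timeShareWeight d d' l x2) =
      (1 - l) * d'.pX2 x2 := by
  rw [mul_one_sub, mul_timeShareWeight hl0 hl1, add_sub_cancel_left]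

def timeShare (d d' : AuxP ch) (l : ℝ) (hl0 : 0 ≤ l) (hl1 : l ≤ 1) : AuxP ch where
  U := d.U ⊕ d'.U
  V := d.V ⊕ d'.V
  pX2 x2 := l * d.pX2 x2 + (1 - l) * d'.pX2 x2
  pV s x2 := Sum.elim (fun v => timeShareWeight d d' l x2 * d.pV s x2 v)
    (fun v => (1 - timeShareWeight d d' l x2) * d'.pV s x2 v)
  pUX1 s vv x2 uu x1 := Sum.elim (fun v => Sum.elim (d.pUX1 s v x2 · x1) 0 uu)
    (fun v => Sum.elim 0 (d'.pUX1 s v x2 · x1) uu) vv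
  pX2_nonneg x2 := add_nonneg (mul_nonneg hl0 (d.pX2_nonneg x2))
    (mul_nonneg (sub_nonneg.2 hl1) (d'.pX2_nonneg x2))
  pX2_sum := by
    rw [Finset.sum_add_distrib, ← Finset.mul_sum, ← Finset.mul_sum, d.pX2_sum, d'.pX2_sum]
    ring
  pV_nonneg s x2 := Sum.rec
    (fun v => mul_nonneg (timeShareWeight_nonneg hl0 hl1 x2) (d.pV_nonneg s x2 v))
    (fun v => mul_nonneg (sub_nonneg.2 (timeShareWeight_le_one hl0 hl1 x2))
      (d'.pV_nonneg s x2 v))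
  pV_sum s x2 := by
    simp only [Fintype.sum_sum_type, Sum.elim_inl, Sum.elim_inr, ← Finset.mul_sum, d.pV_sum,
      d'.pV_sum]
    ring
  pUX1_nonneg s vv x2 uu x1 := by
    rcases vv with v | v <;> rcases uu with u | u
    exacts [d.pUX1_nonneg s v x2 u x1, le_rfl, le_rfl, d'.pUX1_nonneg s v x2 u x1]
  pUX1_sum s vv x2 := by
    rcases vv with v | v <;>
      simp [Fintype.sum_sum_type, d.pUX1_sum, d'.pUX1_sum]

section timeShare
variable (hl0 : 0 ≤ l) (hl1 : l ≤ 1) (s : S) (x1 : X1) (x2 : X2) (y : Y)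

lemma timeShare_joint_inl_inl (u : d.U) (v : d.V) :
    (d.timeShare d' l hl0 hl1).joint s (.inl u) (.inl v) x1 x2 y =
      l * d.joint s u v x1 x2 y := by
  simp only [joint, timeShare, Sum.elim_inl]
  linear_combination (ch.Q s * d.pV s x2 v * d.pUX1 s v x2 u x1 * ch.W x1 x2 s y) *
    mul_timeShareWeight (d := d) (d' := d') hl0 hl1 x2

lemma timeShare_joint_inr_inr (u : d'.U) (v : d'.V) :
    (d.timeShare d' l hl0 hl1).joint s (.inr u) (.inr v) x1 x2 y =
      (1 - l) * d'.joint s u v x1 x2 y := by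
  simp only [joint, timeShare, Sum.elim_inr]
  linear_combination (ch.Q s * d'.pV s x2 v * d'.pUX1 s v x2 u x1 * ch.W x1 x2 s y) *
    mul_one_sub_timeShareWeight (d := d) (d' := d') hl0 hl1 x2

lemma timeShare_joint_inl_inr (u : d.U) (v : d'.V) :
    (d.timeShare d' l hl0 hl1).joint s (.inl u) (.inr v) x1 x2 y = 0 := by
  simp [joint, timeShare]

lemma timeShare_joint_inr_inl (u : d'.U) (v : d.V) :
    (d.timeShare d' l hl0 hl1).joint s (.inr u) (.inl v) x1 x2 y = 0 := by
  simp [joint, timeShare]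

end timeShare

variable (hl0 : 0 ≤ l) (hl1 : l ≤ 1)

lemma timeShare_iUY_VX2 :
    (d.timeShare d' l hl0 hl1).iUY_VX2 = l * d.iUY_VX2 + (1 - l) * d'.iUY_VX2 :=
  cmi_sum_prod_block
    (fun _ _ _ _ => by simp only [timeShare_joint_inl_inl, Finset.mul_sum])
    (fun _ _ _ _ => by simp only [timeShare_joint_inr_inr, Finset.mul_sum])
    (fun _ _ _ _ => by simp only [timeShare_joint_inl_inr, Finset.sum_const_zero])
    (fun _ _ _ _ => by simp only [timeShare_joint_inr_inl, Finset.sum_const_zero])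

lemma timeShare_iUS_VX2 :
    (d.timeShare d' l hl0 hl1).iUS_VX2 = l * d.iUS_VX2 + (1 - l) * d'.iUS_VX2 :=
  cmi_sum_prod_block
    (fun _ _ _ _ => by simp only [timeShare_joint_inl_inl, Finset.mul_sum])
    (fun _ _ _ _ => by simp only [timeShare_joint_inr_inr, Finset.mul_sum])
    (fun _ _ _ _ => by simp only [timeShare_joint_inl_inr, Finset.sum_const_zero])
    (fun _ _ _ _ => by simp only [timeShare_joint_inr_inl, Finset.sum_const_zero])

lemma timeShare_iUVX2S :
    (d.timeShare d' l hl0 hl1).iUVX2S = l * d.iUVX2S + (1 - l) * d'.iUVX2S := by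
  refine (mi_prod_sum_eq_mi_sum _
    (fun _ _ _ _ => by simp only [timeShare_joint_inl_inr, Finset.sum_const_zero])
    (fun _ _ _ _ => by simp only [timeShare_joint_inr_inl, Finset.sum_const_zero])).trans ?_
  exact mi_sum_eq_of_sum_eq hl0 hl1
    (fun _ _ => Finset.sum_nonneg fun _ _ => Finset.sum_nonneg fun _ _ => d.joint_nonneg ..)
    (fun _ _ => Finset.sum_nonneg fun _ _ => Finset.sum_nonneg fun _ _ => d'.joint_nonneg ..)
    (fun s => by rw [d.sum_joint_eq_Q, d'.sum_joint_eq_Q])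
    (fun _ _ => by
      simp only [Sum.elim_inl, Prod.map_fst, Prod.map_snd, id, timeShare_joint_inl_inl,
        Finset.mul_sum])
    (fun _ _ => by
      simp only [Sum.elim_inr, Prod.map_fst, Prod.map_snd, id, timeShare_joint_inr_inr,
        Finset.mul_sum])

lemma le_timeShare_iUVX2Y :
    l * d.iUVX2Y + (1 - l) * d'.iUVX2Y ≤ (d.timeShare d' l hl0 hl1).iUVX2Y := by
  refine le_of_le_of_eq ?_ (mi_prod_sum_eq_mi_sum _
    (fun _ _ _ _ => by simp only [timeShare_joint_inl_inr, Finset.sum_const_zero])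
    (fun _ _ _ _ => by simp only [timeShare_joint_inr_inl, Finset.sum_const_zero])).symm
  exact le_mi_sum hl0 hl1
    (fun _ _ => Finset.sum_nonneg fun _ _ => Finset.sum_nonneg fun _ _ => d.joint_nonneg ..)
    (fun _ _ => Finset.sum_nonneg fun _ _ => Finset.sum_nonneg fun _ _ => d'.joint_nonneg ..)
    (fun _ _ => by
      simp only [Sum.elim_inl, Prod.map_fst, Prod.map_snd, id, timeShare_joint_inl_inl,
        Finset.mul_sum])
    (fun _ _ => by
      simp only [Sum.elim_inr, Prod.map_fst, Prod.map_snd, id, timeShare_joint_inr_inr,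
        Finset.mul_sum])

end AuxP

/-- Proposition 1, part 1: the set 𝒞 is convex. -/
theorem regionC_convex {S X1 X2 Y : Type} [Fintype S] [Fintype X1] [Fintype X2] [Fintype Y]
    (ch : DMMAC S X1 X2 Y) (Rc R1 Rc' R1' : ℝ)
    (h : (Rc, R1) ∈ regionC ch) (h' : (Rc', R1') ∈ regionC ch)
    (l : ℝ) (hl0 : 0 ≤ l) (hl1 : l ≤ 1) :
    (l * Rc + (1 - l) * Rc', l * R1 + (1 - l) * R1') ∈ regionC ch := by
  obtain ⟨hRc, hR1, d, hd1, hd2⟩ := h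
  obtain ⟨hRc', hR1', d', hd1', hd2'⟩ := h'
  have hl1' : 0 ≤ 1 - l := sub_nonneg.2 hl1
  refine ⟨by positivity, by positivity, d.timeShare d' l hl0 hl1, ?_, ?_⟩
  · rw [AuxP.timeShare_iUY_VX2, AuxP.timeShare_iUS_VX2]
    linarith [mul_le_mul_of_nonneg_left hd1 hl0, mul_le_mul_of_nonneg_left hd1' hl1']
  · rw [AuxP.timeShare_iUVX2S]
    linarith [AuxP.le_timeShare_iUVX2Y (d := d) (d' := d') hl0 hl1,
      mul_le_mul_of_nonneg_left hd2 hl0, mul_le_mul_of_nonneg_left hd2' hl1']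
end
end

section
/- Adding the constraint I(V,X₂;Y) − I(V,X₂;S) ≥ 0 does not change the set C: the union over all (S,U,V,X₁,X₂,Y) ∈ 𝒫 of the rate pairs (Rc,R1) with Rc ≥ 0, R1 ≥ 0, R1 ≤ I(U;Y|V,X₂) − I(U;S|V,X₂) and Rc + R1 ≤ I(U,V,X₂;Y) − I(U,V,X₂;S) equals the union of the same rate regions taken only over those (S,U,V,X₁,X₂,Y) ∈ 𝒫 that satisfy I(V,X₂;Y) − I(V,X₂;S) ≥ 0. -/
open scoped BigOperators

noncomputable section

variable {S X1 X2 Y : Type} [Fintype S] [Fintype X1] [Fintype X2] [Fintype Y]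

section Aux
open scoped Classical

variable {ch : DMMAC S X1 X2 Y}

lemma sum_pos_of_elem {α : Type} [Fintype α] (f : α → ℝ) (h0 : ∀ a, 0 ≤ f a) (a : α)
    (h : 0 < f a) : 0 < ∑ x, f x :=
  lt_of_lt_of_le h (Finset.single_le_sum (fun i _ => h0 i) (Finset.mem_univ a))

lemma mv3 {α β γ : Type} [Fintype α] [Fintype β] [Fintype γ] (f : α → β → γ → ℝ) :
    ∑ a, ∑ b, ∑ c, f a b c = ∑ b, ∑ c, ∑ a, f a b c := by
  rw [Finset.sum_comm]
  exact Finset.sum_congr rfl fun b _ => Finset.sum_comm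

lemma mv4 {α β γ δ : Type} [Fintype α] [Fintype β] [Fintype γ] [Fintype δ]
    (f : α → β → γ → δ → ℝ) :
    ∑ a, ∑ b, ∑ c, ∑ d, f a b c d = ∑ b, ∑ c, ∑ d, ∑ a, f a b c d := by
  rw [Finset.sum_comm]
  exact Finset.sum_congr rfl fun b _ => mv3 _

lemma mv5 {α β γ δ ε : Type} [Fintype α] [Fintype β] [Fintype γ] [Fintype δ] [Fintype ε]
    (f : α → β → γ → δ → ε → ℝ) :
    ∑ a, ∑ b, ∑ c, ∑ d, ∑ e, f a b c d e = ∑ b, ∑ c, ∑ d, ∑ e, ∑ a, f a b c d e := by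
  rw [Finset.sum_comm]
  exact Finset.sum_congr rfl fun b _ => mv4 _

lemma sum_ite_const {α : Type} [Fintype α] (c : Prop) [Decidable c] (f : α → ℝ) :
    (∑ x, if c then f x else 0) = if c then ∑ x, f x else 0 := by
  split <;> simp

lemma mi_scale {A A' B : Type} [Fintype A] [Fintype A'] [Fintype B]
    (p : A → B → ℝ) (p' : A' → B → ℝ) (π : A' → A) (c : A' → ℝ) (κ : B → ℝ)
    (hc : ∀ a', 0 ≤ c a')
    (hp : ∀ a' b, p' a' b = c a' * p (π a') b)
    (hcol : ∀ b, ∑ a', p' a' b = κ b) :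
    mi p' = ∑ a', c a' * ∑ b, p (π a') b *
      Real.log (p (π a') b / ((∑ b', p (π a') b') * κ b)) := by
  unfold mi
  refine Finset.sum_congr rfl fun a' _ => ?_
  rw [Finset.mul_sum]
  refine Finset.sum_congr rfl fun b _ => ?_
  have hrow : ∑ b', p' a' b' = c a' * ∑ b', p (π a') b' := by
    simp only [hp]; rw [Finset.mul_sum]
  rw [hrow, hcol b, hp a' b]
  rcases eq_or_lt_of_le (hc a') with h0 | hpos
  · rw [← h0]; simp
  · have e : c a' * p (π a') b / ((c a' * ∑ b', p (π a') b') * κ b)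
        = p (π a') b / ((∑ b', p (π a') b') * κ b) := by
      rw [mul_assoc (c a') (∑ b', p (π a') b') (κ b), mul_div_mul_left _ _ (ne_of_gt hpos)]
    rw [e]
    ring

lemma mi_chain {A B C : Type} [Fintype A] [Fintype B] [Fintype C]
    (p : A → B → C → ℝ) (h0 : ∀ a b c, 0 ≤ p a b c) :
    mi (fun (ac : A × C) b => p ac.1 b ac.2) =
      mi (fun c b => ∑ a, p a b c) + cmi p := by
  unfold mi cmi
  simp only [Fintype.sum_prod_type]
  -- LHS : ∑ a, ∑ c, ∑ b, ...  → reorder to ∑ a, ∑ b, ∑ c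
  rw [show (∑ a, ∑ c, ∑ b, p a b c *
        Real.log (p a b c / ((∑ b', p a b' c) * ∑ a', ∑ c', p a' b c')))
      = ∑ a, ∑ b, ∑ c, p a b c *
        Real.log (p a b c / ((∑ b', p a b' c) * ∑ a', ∑ c', p a' b c'))
      from Finset.sum_congr rfl fun a _ => Finset.sum_comm]
  -- M1 : ∑ c, ∑ b, (∑ a, p a b c) * log(...) → ∑ a, ∑ b, ∑ c
  have hM1 : (∑ c, ∑ b, (∑ a, p a b c) *
        Real.log ((∑ a, p a b c) / ((∑ b', ∑ a, p a b' c) * ∑ c', ∑ a, p a b c')))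
      = ∑ a, ∑ b, ∑ c, p a b c *
        Real.log ((∑ a', p a' b c) / ((∑ b', ∑ a', p a' b' c) * ∑ c', ∑ a', p a' b c')) := by
    have e1 : ∀ c b, (∑ a, p a b c) *
        Real.log ((∑ a, p a b c) / ((∑ b', ∑ a, p a b' c) * ∑ c', ∑ a, p a b c'))
        = ∑ a, p a b c *
          Real.log ((∑ a', p a' b c) / ((∑ b', ∑ a', p a' b' c) * ∑ c', ∑ a', p a' b c')) :=
      fun c b => Finset.sum_mul _ _ _
    simp only [e1]
    rw [mv3, Finset.sum_comm]
  rw [hM1, ← Finset.sum_add_distrib]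
  refine Finset.sum_congr rfl fun a _ => ?_
  rw [← Finset.sum_add_distrib]
  refine Finset.sum_congr rfl fun b _ => ?_
  rw [← Finset.sum_add_distrib]
  refine Finset.sum_congr rfl fun c _ => ?_
  rcases eq_or_lt_of_le (h0 a b c) with hz | hpos
  · rw [← hz]; simp
  · have mAC : 0 < ∑ b', p a b' c := sum_pos_of_elem _ (fun b' => h0 a b' c) b hpos
    have mBC : 0 < ∑ a', p a' b c := sum_pos_of_elem _ (fun a' => h0 a' b c) a hpos
    have mB : 0 < ∑ a', ∑ c', p a' b c' :=
      sum_pos_of_elem _ (fun a' => Finset.sum_nonneg fun c' _ => h0 a' b c') a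
        (sum_pos_of_elem _ (fun c' => h0 a b c') c hpos)
    have mC : 0 < ∑ a', ∑ b', p a' b' c :=
      sum_pos_of_elem _ (fun a' => Finset.sum_nonneg fun b' _ => h0 a' b' c) a
        (sum_pos_of_elem _ (fun b' => h0 a b' c) b hpos)
    have eB : (∑ c', ∑ a', p a' b c') = ∑ a', ∑ c', p a' b c' := Finset.sum_comm
    have eC : (∑ b', ∑ a', p a' b' c) = ∑ a', ∑ b', p a' b' c := Finset.sum_comm
    rw [eB, eC]
    rw [Real.log_div hpos.ne' (mul_pos mAC mB).ne',
        Real.log_div mBC.ne' (mul_pos mC mB).ne',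
        Real.log_div (mul_pos mC hpos).ne' (mul_pos mAC mBC).ne',
        Real.log_mul mAC.ne' mB.ne', Real.log_mul mC.ne' mB.ne',
        Real.log_mul mC.ne' hpos.ne', Real.log_mul mAC.ne' mBC.ne']
    ring

lemma mi_nonneg {A B : Type} [Fintype A] [Fintype B] (p : A → B → ℝ)
    (h0 : ∀ a b, 0 ≤ p a b) (h1 : ∑ a, ∑ b, p a b = 1) : 0 ≤ mi p := by
  have key : ∀ a b, p a b - (∑ b', p a b') * (∑ a', p a' b) ≤
      p a b * Real.log (p a b / ((∑ b', p a b') * (∑ a', p a' b))) := by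
    intro a b
    rcases eq_or_lt_of_le (h0 a b) with h | h
    · rw [← h]
      simp only [zero_mul, zero_sub, neg_nonpos]
      exact mul_nonneg (Finset.sum_nonneg fun b' _ => h0 a b')
        (Finset.sum_nonneg fun a' _ => h0 a' b)
    · have hq : 0 < ∑ b', p a b' := sum_pos_of_elem _ (fun b' => h0 a b') b h
      have hr : 0 < ∑ a', p a' b := sum_pos_of_elem _ (fun a' => h0 a' b) a h
      have hm : 0 < (∑ b', p a b') * (∑ a', p a' b) := mul_pos hq hr
      have h2 : Real.log ((∑ b', p a b') * (∑ a', p a' b)) - Real.log (p a b) ≤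
          ((∑ b', p a b') * (∑ a', p a' b)) / p a b - 1 := by
        rw [← Real.log_div hm.ne' h.ne']
        exact Real.log_le_sub_one_of_pos (div_pos hm h)
      have h3 : p a b * (1 - ((∑ b', p a b') * (∑ a', p a' b)) / p a b)
          ≤ p a b * (Real.log (p a b) - Real.log ((∑ b', p a b') * (∑ a', p a' b))) :=
        mul_le_mul_of_nonneg_left (by linarith) h.le
      have h4 : p a b * (1 - ((∑ b', p a b') * (∑ a', p a' b)) / p a b)
          = p a b - (∑ b', p a b') * (∑ a', p a' b) := by
        field_simp
      rw [Real.log_div h.ne' hm.ne']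
      linarith
  have tot : ∑ a, ∑ b, (p a b - (∑ b', p a b') * (∑ a', p a' b)) = 0 := by
    have e1 : ∑ a, ∑ b, (∑ b', p a b') * (∑ a', p a' b)
        = (∑ a, ∑ b', p a b') * (∑ b, ∑ a', p a' b) := by
      rw [Finset.sum_mul]
      exact Finset.sum_congr rfl fun a _ => by rw [Finset.mul_sum]
    simp only [Finset.sum_sub_distrib]
    have e2 : ∑ b, ∑ a', p a' b = 1 := by rw [Finset.sum_comm]; exact h1
    rw [e1, h1, e2]
    norm_num
  calc (0:ℝ) = ∑ a, ∑ b, (p a b - (∑ b', p a b') * (∑ a', p a' b)) := tot.symm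
    _ ≤ mi p := Finset.sum_le_sum fun a _ => Finset.sum_le_sum fun b _ => key a b

lemma mi_prod {A B : Type} [Fintype A] [Fintype B] (g : A → ℝ) (h : B → ℝ)
    (hg : ∑ a, g a = 1) (hh : ∑ b, h b = 1) :
    mi (fun a b => g a * h b) = 0 := by
  unfold mi
  refine Finset.sum_eq_zero fun a _ => Finset.sum_eq_zero fun b _ => ?_
  have h1 : ∑ b', g a * h b' = g a := by rw [← Finset.mul_sum, hh, mul_one]
  have h2 : ∑ a', g a' * h b = h b := by rw [← Finset.sum_mul, hg, one_mul]
  rw [h1, h2]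
  rcases eq_or_ne (g a * h b) 0 with h0 | h0
  · rw [h0]; simp
  · rw [div_self h0, Real.log_one, mul_zero]


lemma joint_nonneg (d : AuxP ch) (s : S) (u : d.U) (v : d.V) (x1 : X1) (x2 : X2) (y : Y) :
    0 ≤ d.joint s u v x1 x2 y :=
  mul_nonneg (mul_nonneg (mul_nonneg (mul_nonneg (ch.Q_nonneg s) (d.pX2_nonneg x2))
    (d.pV_nonneg s x2 v)) (d.pUX1_nonneg s v x2 u x1)) (ch.W_nonneg x1 x2 s y)


def tilt (d : AuxP ch) (l : ℝ) (hl0 : 0 ≤ l) (hl1 : l ≤ 1) : AuxP ch where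
  U := d.U × d.V
  V := Option d.V
  pX2 := d.pX2
  pV := fun s x2 o => o.elim (1 - l) (fun v0 => l * d.pV s x2 v0)
  pUX1 := fun s o x2 uv x1 =>
    o.elim (d.pV s x2 uv.2 * d.pUX1 s uv.2 x2 uv.1 x1)
      (fun v0 => (if uv.2 = v0 then 1 else 0) * d.pUX1 s uv.2 x2 uv.1 x1)
  pX2_nonneg := d.pX2_nonneg
  pX2_sum := d.pX2_sum
  pV_nonneg := by
    rintro s x2 (_ | v0)
    · simpa using sub_nonneg.mpr hl1
    · exact mul_nonneg hl0 (d.pV_nonneg s x2 v0)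
  pV_sum := by
    intro s x2
    rw [Fintype.sum_option]
    simp only [Option.elim_none, Option.elim_some]
    rw [← Finset.mul_sum, d.pV_sum, mul_one]
    ring
  pUX1_nonneg := by
    rintro s (_ | v0) x2 ⟨u, v⟩ x1
    · exact mul_nonneg (d.pV_nonneg s x2 v) (d.pUX1_nonneg s v x2 u x1)
    · exact mul_nonneg (by split <;> norm_num) (d.pUX1_nonneg s v x2 u x1)
  pUX1_sum := by
    rintro s (_ | v0) x2
    · simp only [Option.elim_none, Fintype.sum_prod_type]
      rw [Finset.sum_comm]
      have e : ∀ v : d.V, (∑ u, ∑ x1, d.pV s x2 v * d.pUX1 s v x2 u x1)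
          = d.pV s x2 v := by
        intro v
        simp only [← Finset.mul_sum]
        rw [d.pUX1_sum, mul_one]
      simp only [e]
      exact d.pV_sum s x2
    · simp only [Option.elim_some, Fintype.sum_prod_type, ite_mul, one_mul, zero_mul]
      have e : ∀ u : d.U, (∑ v : d.V, ∑ x1, if v = v0 then d.pUX1 s v x2 u x1 else 0)
          = ∑ x1, d.pUX1 s v0 x2 u x1 := by
        intro u
        rw [Finset.sum_comm]
        simp [Finset.sum_ite_eq']
      simp only [e]
      exact d.pUX1_sum s v0 x2

@[simp] lemma tilt_pX2 (d : AuxP ch) (l : ℝ) (hl0 : 0 ≤ l) (hl1 : l ≤ 1) :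
    (tilt d l hl0 hl1).pX2 = d.pX2 := rfl

@[simp] lemma tilt_pV_none (d : AuxP ch) (l : ℝ) (hl0 : 0 ≤ l) (hl1 : l ≤ 1) (s : S) (x2 : X2) :
    (tilt d l hl0 hl1).pV s x2 none = 1 - l := rfl

@[simp] lemma tilt_pV_some (d : AuxP ch) (l : ℝ) (hl0 : 0 ≤ l) (hl1 : l ≤ 1) (s : S) (x2 : X2)
    (v0 : d.V) : (tilt d l hl0 hl1).pV s x2 (some v0) = l * d.pV s x2 v0 := rfl

@[simp] lemma tilt_pUX1_none (d : AuxP ch) (l : ℝ) (hl0 : 0 ≤ l) (hl1 : l ≤ 1) (s : S) (x2 : X2)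
    (u : d.U) (v : d.V) (x1 : X1) :
    (tilt d l hl0 hl1).pUX1 s none x2 (u, v) x1
      = d.pV s x2 v * d.pUX1 s v x2 u x1 := rfl

@[simp] lemma tilt_pUX1_some (d : AuxP ch) (l : ℝ) (hl0 : 0 ≤ l) (hl1 : l ≤ 1) (s : S) (x2 : X2)
    (u : d.U) (v v0 : d.V) (x1 : X1) :
    (tilt d l hl0 hl1).pUX1 s (some v0) x2 (u, v) x1
      = (if v = v0 then 1 else 0) * d.pUX1 s v x2 u x1 := rfl

lemma tilt_joint_none (d : AuxP ch) (l : ℝ) (hl0 : 0 ≤ l) (hl1 : l ≤ 1) (s : S) (u : d.U)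
    (v : d.V) (x1 : X1) (x2 : X2) (y : Y) :
    (tilt d l hl0 hl1).joint s (u, v) none x1 x2 y = (1 - l) * d.joint s u v x1 x2 y := by
  simp only [AuxP.joint, tilt_pX2, tilt_pV_none, tilt_pUX1_none]
  ring

lemma tilt_joint_some (d : AuxP ch) (l : ℝ) (hl0 : 0 ≤ l) (hl1 : l ≤ 1) (s : S) (u : d.U)
    (v v0 : d.V) (x1 : X1) (x2 : X2) (y : Y) :
    (tilt d l hl0 hl1).joint s (u, v) (some v0) x1 x2 y
      = if v = v0 then l * d.joint s u v x1 x2 y else 0 := by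
  simp only [AuxP.joint, tilt_pX2, tilt_pV_some, tilt_pUX1_some]
  by_cases h : v = v0
  · subst h
    simp only [eq_self_iff_true, if_true]
    ring
  · simp [h]


lemma tilt_iUVX2Y (d : AuxP ch) (l : ℝ) (hl0 : 0 ≤ l) (hl1 : l ≤ 1) :
    (tilt d l hl0 hl1).iUVX2Y = d.iUVX2Y := by
  have hc : ∀ a : (d.U × d.V) × (Option d.V) × X2,
      0 ≤ (a.2.1.elim (1 - l) fun v0 => if a.1.2 = v0 then l else 0 : ℝ) := by
    rintro ⟨⟨u, v⟩, o, x2⟩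
    cases o with
    | none => simpa using sub_nonneg.mpr hl1
    | some v0 => simp only [Option.elim_some]; split <;> [exact hl0; exact le_refl 0]
  have hp : ∀ (a : (d.U × d.V) × (Option d.V) × X2) (y : Y),
      (∑ s, ∑ x1, (tilt d l hl0 hl1).joint s a.1 a.2.1 x1 a.2.2 y)
        = (a.2.1.elim (1 - l) fun v0 => if a.1.2 = v0 then l else 0) *
            (∑ s, ∑ x1, d.joint s (a.1.1, a.1.2, a.2.2).1 (a.1.1, a.1.2, a.2.2).2.1 x1
              (a.1.1, a.1.2, a.2.2).2.2 y) := by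
    rintro ⟨⟨u, v⟩, o, x2⟩ y
    cases o with
    | none => simp only [tilt_joint_none, Option.elim_none, ← Finset.mul_sum]
    | some v0 =>
      simp only [tilt_joint_some, Option.elim_some]
      by_cases h : v = v0
      · simp only [h, eq_self_iff_true, if_true, ← Finset.mul_sum]
      · simp [h]
  have hcol : ∀ y : Y,
      (∑ a : (d.U × d.V) × (Option d.V) × X2,
          ∑ s, ∑ x1, (tilt d l hl0 hl1).joint s a.1 a.2.1 x1 a.2.2 y)
        = ∑ a : d.U × d.V × X2, ∑ s, ∑ x1, d.joint s a.1 a.2.1 x1 a.2.2 y := by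
    intro y
    simp only [hp, Fintype.sum_prod_type, Fintype.sum_option, Option.elim_none,
      Option.elim_some]
    refine Finset.sum_congr rfl fun u _ => Finset.sum_congr rfl fun v _ => ?_
    simp only [ite_mul, zero_mul, sum_ite_const, Finset.sum_ite_eq, Finset.mem_univ, if_true,
      ← Finset.mul_sum]
    ring
  have collapse : ∀ T : d.U × d.V × X2 → ℝ,
      (∑ a : (d.U × d.V) × (Option d.V) × X2,
        (a.2.1.elim (1 - l) fun v0 => if a.1.2 = v0 then l else 0) * T (a.1.1, a.1.2, a.2.2))
        = ∑ a : d.U × d.V × X2, T a := by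
    intro T
    simp only [Fintype.sum_prod_type, Fintype.sum_option, Option.elim_none, Option.elim_some]
    refine Finset.sum_congr rfl fun u _ => Finset.sum_congr rfl fun v _ => ?_
    simp only [ite_mul, zero_mul, sum_ite_const, Finset.sum_ite_eq, Finset.mem_univ, if_true,
      ← Finset.mul_sum]
    ring
  rw [show (tilt d l hl0 hl1).iUVX2Y = mi (fun (a : (d.U × d.V) × (Option d.V) × X2) (y : Y) =>
        ∑ s, ∑ x1, (tilt d l hl0 hl1).joint s a.1 a.2.1 x1 a.2.2 y) from rfl,
      show d.iUVX2Y = mi (fun (a : d.U × d.V × X2) (y : Y) =>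
        ∑ s, ∑ x1, d.joint s a.1 a.2.1 x1 a.2.2 y) from rfl,
      mi_scale (fun (a : d.U × d.V × X2) (y : Y) => ∑ s, ∑ x1, d.joint s a.1 a.2.1 x1 a.2.2 y)
        (fun (a : (d.U × d.V) × (Option d.V) × X2) (y : Y) =>
          ∑ s, ∑ x1, (tilt d l hl0 hl1).joint s a.1 a.2.1 x1 a.2.2 y)
        (fun a => (a.1.1, a.1.2, a.2.2))
        (fun a => a.2.1.elim (1 - l) fun v0 => if a.1.2 = v0 then l else 0)
        (fun y => ∑ a : d.U × d.V × X2, ∑ s, ∑ x1, d.joint s a.1 a.2.1 x1 a.2.2 y)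
        hc hp hcol]
  exact collapse (fun (a : d.U × d.V × X2) =>
    ∑ y, (∑ s, ∑ x1, d.joint s a.1 a.2.1 x1 a.2.2 y) *
      Real.log ((∑ s, ∑ x1, d.joint s a.1 a.2.1 x1 a.2.2 y) /
        ((∑ y', ∑ s, ∑ x1, d.joint s a.1 a.2.1 x1 a.2.2 y') *
          ∑ a'' : d.U × d.V × X2, ∑ s, ∑ x1, d.joint s a''.1 a''.2.1 x1 a''.2.2 y)))


lemma tilt_iUVX2S (d : AuxP ch) (l : ℝ) (hl0 : 0 ≤ l) (hl1 : l ≤ 1) :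
    (tilt d l hl0 hl1).iUVX2S = d.iUVX2S := by
  have hc : ∀ a : (d.U × d.V) × (Option d.V) × X2,
      0 ≤ (a.2.1.elim (1 - l) fun v0 => if a.1.2 = v0 then l else 0 : ℝ) := by
    rintro ⟨⟨u, v⟩, o, x2⟩
    cases o with
    | none => simpa using sub_nonneg.mpr hl1
    | some v0 => simp only [Option.elim_some]; split <;> [exact hl0; exact le_refl 0]
  have hp : ∀ (a : (d.U × d.V) × (Option d.V) × X2) (s : S),
      (∑ x1, ∑ y, (tilt d l hl0 hl1).joint s a.1 a.2.1 x1 a.2.2 y)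
        = (a.2.1.elim (1 - l) fun v0 => if a.1.2 = v0 then l else 0) *
            (∑ x1, ∑ y, d.joint s (a.1.1, a.1.2, a.2.2).1 (a.1.1, a.1.2, a.2.2).2.1 x1
              (a.1.1, a.1.2, a.2.2).2.2 y) := by
    rintro ⟨⟨u, v⟩, o, x2⟩ s
    cases o with
    | none => simp only [tilt_joint_none, Option.elim_none, ← Finset.mul_sum]
    | some v0 =>
      simp only [tilt_joint_some, Option.elim_some]
      by_cases h : v = v0
      · simp only [h, eq_self_iff_true, if_true, ← Finset.mul_sum]
      · simp [h]
  have hcol : ∀ s : S,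
      (∑ a : (d.U × d.V) × (Option d.V) × X2,
          ∑ x1, ∑ y, (tilt d l hl0 hl1).joint s a.1 a.2.1 x1 a.2.2 y)
        = ∑ a : d.U × d.V × X2, ∑ x1, ∑ y, d.joint s a.1 a.2.1 x1 a.2.2 y := by
    intro s
    simp only [hp, Fintype.sum_prod_type, Fintype.sum_option, Option.elim_none,
      Option.elim_some]
    refine Finset.sum_congr rfl fun u _ => Finset.sum_congr rfl fun v _ => ?_
    simp only [ite_mul, zero_mul, sum_ite_const, Finset.sum_ite_eq, Finset.mem_univ, if_true,
      ← Finset.mul_sum]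
    ring
  have collapse : ∀ T : d.U × d.V × X2 → ℝ,
      (∑ a : (d.U × d.V) × (Option d.V) × X2,
        (a.2.1.elim (1 - l) fun v0 => if a.1.2 = v0 then l else 0) * T (a.1.1, a.1.2, a.2.2))
        = ∑ a : d.U × d.V × X2, T a := by
    intro T
    simp only [Fintype.sum_prod_type, Fintype.sum_option, Option.elim_none, Option.elim_some]
    refine Finset.sum_congr rfl fun u _ => Finset.sum_congr rfl fun v _ => ?_
    simp only [ite_mul, zero_mul, sum_ite_const, Finset.sum_ite_eq, Finset.mem_univ, if_true,
      ← Finset.mul_sum]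
    ring
  rw [show (tilt d l hl0 hl1).iUVX2S = mi (fun (a : (d.U × d.V) × (Option d.V) × X2) (s : S) =>
        ∑ x1, ∑ y, (tilt d l hl0 hl1).joint s a.1 a.2.1 x1 a.2.2 y) from rfl,
      show d.iUVX2S = mi (fun (a : d.U × d.V × X2) (s : S) =>
        ∑ x1, ∑ y, d.joint s a.1 a.2.1 x1 a.2.2 y) from rfl,
      mi_scale (fun (a : d.U × d.V × X2) (s : S) => ∑ x1, ∑ y, d.joint s a.1 a.2.1 x1 a.2.2 y)
        (fun (a : (d.U × d.V) × (Option d.V) × X2) (s : S) =>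
          ∑ x1, ∑ y, (tilt d l hl0 hl1).joint s a.1 a.2.1 x1 a.2.2 y)
        (fun a => (a.1.1, a.1.2, a.2.2))
        (fun a => a.2.1.elim (1 - l) fun v0 => if a.1.2 = v0 then l else 0)
        (fun s => ∑ a : d.U × d.V × X2, ∑ x1, ∑ y, d.joint s a.1 a.2.1 x1 a.2.2 y)
        hc hp hcol]
  exact collapse (fun (a : d.U × d.V × X2) =>
    ∑ s, (∑ x1, ∑ y, d.joint s a.1 a.2.1 x1 a.2.2 y) *
      Real.log ((∑ x1, ∑ y, d.joint s a.1 a.2.1 x1 a.2.2 y) /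
        ((∑ s', ∑ x1, ∑ y, d.joint s' a.1 a.2.1 x1 a.2.2 y) *
          ∑ a'' : d.U × d.V × X2, ∑ x1, ∑ y, d.joint s a''.1 a''.2.1 x1 a''.2.2 y)))

lemma tilt_iVX2Y (d : AuxP ch) (l : ℝ) (hl0 : 0 ≤ l) (hl1 : l ≤ 1) :
    (tilt d l hl0 hl1).iVX2Y = l * d.iVX2Y + (1 - l) * d.iX2Y := by
  have e : ∀ y : Y, (∑ x2, ∑ s, ∑ u, ∑ v, ∑ x1, d.joint s u v x1 x2 y)
      = ∑ v, ∑ x2, ∑ s, ∑ u, ∑ x1, d.joint s u v x1 x2 y :=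
    fun y => (mv4 fun v x2 s u => ∑ x1, d.joint s u v x1 x2 y).symm
  have hc : ∀ b : Option d.V × X2, 0 ≤ (b.1.elim (1 - l) fun _ => l : ℝ) := by
    rintro ⟨o, x2⟩
    cases o with
    | none => simpa using sub_nonneg.mpr hl1
    | some v0 => simpa using hl0
  have hp : ∀ (b : Option d.V × X2) (y : Y),
      (∑ s, ∑ u : d.U × d.V, ∑ x1, (tilt d l hl0 hl1).joint s u b.1 x1 b.2 y)
        = (b.1.elim (1 - l) fun _ => l) *
            (b.1.elim (∑ s, ∑ u, ∑ v, ∑ x1, d.joint s u v x1 b.2 y)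
              (fun v0 => ∑ s, ∑ u, ∑ x1, d.joint s u v0 x1 b.2 y)) := by
    rintro ⟨o, x2⟩ y
    cases o with
    | none =>
      simp only [Fintype.sum_prod_type, tilt_joint_none, Option.elim_none, ← Finset.mul_sum]
    | some v0 =>
      simp only [Fintype.sum_prod_type, tilt_joint_some, Option.elim_some, sum_ite_const,
        Finset.sum_ite_eq', Finset.mem_univ, if_true, ← Finset.mul_sum]
  have hcol : ∀ y : Y,
      (∑ b : Option d.V × X2,
          ∑ s, ∑ u : d.U × d.V, ∑ x1, (tilt d l hl0 hl1).joint s u b.1 x1 b.2 y)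
        = ∑ b : d.V × X2, ∑ s, ∑ u, ∑ x1, d.joint s u b.1 x1 b.2 y := by
    intro y
    simp only [hp]
    simp only [Fintype.sum_prod_type, Fintype.sum_option, Option.elim_none, Option.elim_some]
    simp only [← Finset.mul_sum]
    rw [e y]
    ring
  rw [show (tilt d l hl0 hl1).iVX2Y = mi (fun (b : Option d.V × X2) (y : Y) =>
        ∑ s, ∑ u : d.U × d.V, ∑ x1, (tilt d l hl0 hl1).joint s u b.1 x1 b.2 y) from rfl,
      show d.iVX2Y = mi (fun (b : d.V × X2) (y : Y) =>
        ∑ s, ∑ u, ∑ x1, d.joint s u b.1 x1 b.2 y) from rfl,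
      show d.iX2Y = mi (fun (x2 : X2) (y : Y) =>
        ∑ s, ∑ u, ∑ v, ∑ x1, d.joint s u v x1 x2 y) from rfl,
      mi_scale (fun (b : Option d.V × X2) (y : Y) =>
          b.1.elim (∑ s, ∑ u, ∑ v, ∑ x1, d.joint s u v x1 b.2 y)
            (fun v0 => ∑ s, ∑ u, ∑ x1, d.joint s u v0 x1 b.2 y))
        (fun (b : Option d.V × X2) (y : Y) =>
          ∑ s, ∑ u : d.U × d.V, ∑ x1, (tilt d l hl0 hl1).joint s u b.1 x1 b.2 y)
        (fun b => b)
        (fun b => b.1.elim (1 - l) fun _ => l)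
        (fun y => ∑ b : d.V × X2, ∑ s, ∑ u, ∑ x1, d.joint s u b.1 x1 b.2 y)
        hc hp hcol]
  simp only [mi, Fintype.sum_prod_type, Fintype.sum_option, Option.elim_none, Option.elim_some]
  simp only [e]
  simp only [← Finset.mul_sum]
  ring

lemma point_X2S (d : AuxP ch) : ∀ (x2 : X2) (s : S),
    (∑ u, ∑ v, ∑ x1, ∑ y, d.joint s u v x1 x2 y) = d.pX2 x2 * ch.Q s := by
  intro x2 s
  have h1 : ∀ (u : d.U) (v : d.V) (x1 : X1), (∑ y, d.joint s u v x1 x2 y)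
      = ch.Q s * d.pX2 x2 * d.pV s x2 v * d.pUX1 s v x2 u x1 := by
    intro u v x1
    simp only [AuxP.joint, ← Finset.mul_sum, ch.W_sum, mul_one]
  simp only [h1]
  rw [Finset.sum_comm]
  have h2 : ∀ v : d.V, (∑ u, ∑ x1, ch.Q s * d.pX2 x2 * d.pV s x2 v * d.pUX1 s v x2 u x1)
      = ch.Q s * d.pX2 x2 * d.pV s x2 v := by
    intro v
    simp only [← Finset.mul_sum]
    rw [d.pUX1_sum, mul_one]
  simp only [h2]
  simp only [← Finset.mul_sum]
  rw [d.pV_sum, mul_one]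
  ring

lemma iX2S_zero (d : AuxP ch) :
    mi (fun (x2 : X2) (s : S) => ∑ u, ∑ v, ∑ x1, ∑ y, d.joint s u v x1 x2 y) = 0 := by
  rw [show (fun (x2 : X2) (s : S) => ∑ u, ∑ v, ∑ x1, ∑ y, d.joint s u v x1 x2 y)
      = fun (x2 : X2) (s : S) => d.pX2 x2 * ch.Q s from
    funext fun x2 => funext fun s => point_X2S d x2 s]
  exact mi_prod d.pX2 ch.Q d.pX2_sum ch.Q_sum

lemma total_one (d : AuxP ch) :
    (∑ x2, ∑ y, ∑ s, ∑ u, ∑ v, ∑ x1, d.joint s u v x1 x2 y) = 1 := by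
  have h1 : ∀ x2 : X2, (∑ y, ∑ s, ∑ u, ∑ v, ∑ x1, d.joint s u v x1 x2 y)
      = ∑ s, ∑ u, ∑ v, ∑ x1, ∑ y, d.joint s u v x1 x2 y :=
    fun x2 => mv5 fun y s u v x1 => d.joint s u v x1 x2 y
  simp only [h1]
  have h2 : ∀ x2 : X2, (∑ s, ∑ u, ∑ v, ∑ x1, ∑ y, d.joint s u v x1 x2 y)
      = ∑ s, ∑ u, ∑ v, ∑ x1, ∑ y, d.joint s u v x1 x2 y := fun _ => rfl
  have h3 : ∀ x2 : X2, (∑ s, ∑ u, ∑ v, ∑ x1, ∑ y, d.joint s u v x1 x2 y)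
      = ∑ s, ∑ u, ∑ v, ∑ x1, ch.Q s * d.pX2 x2 * d.pV s x2 v * d.pUX1 s v x2 u x1 := by
    intro x2
    refine Finset.sum_congr rfl fun s _ => Finset.sum_congr rfl fun u _ =>
      Finset.sum_congr rfl fun v _ => Finset.sum_congr rfl fun x1 _ => ?_
    simp only [AuxP.joint, ← Finset.mul_sum, ch.W_sum, mul_one]
  simp only [h3]
  have h4 : ∀ (x2 : X2) (s : S),
      (∑ u, ∑ v, ∑ x1, ch.Q s * d.pX2 x2 * d.pV s x2 v * d.pUX1 s v x2 u x1)
      = ch.Q s * d.pX2 x2 := by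
    intro x2 s
    rw [Finset.sum_comm]
    have h5 : ∀ v : d.V, (∑ u, ∑ x1, ch.Q s * d.pX2 x2 * d.pV s x2 v * d.pUX1 s v x2 u x1)
        = ch.Q s * d.pX2 x2 * d.pV s x2 v := by
      intro v
      simp only [← Finset.mul_sum]
      rw [d.pUX1_sum, mul_one]
    simp only [h5]
    simp only [← Finset.mul_sum]
    rw [d.pV_sum, mul_one]
  simp only [h4]
  rw [Finset.sum_comm]
  have h6 : ∀ s : S, (∑ x2, ch.Q s * d.pX2 x2) = ch.Q s := by
    intro s
    rw [← Finset.mul_sum, d.pX2_sum, mul_one]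
  simp only [h6]
  exact ch.Q_sum

lemma iX2Y_nonneg (d : AuxP ch) : 0 ≤ d.iX2Y := by
  rw [show d.iX2Y = mi (fun (x2 : X2) (y : Y) =>
      ∑ s, ∑ u, ∑ v, ∑ x1, d.joint s u v x1 x2 y) from rfl]
  exact mi_nonneg _
    (fun x2 y => Finset.sum_nonneg fun s _ => Finset.sum_nonneg fun u _ =>
      Finset.sum_nonneg fun v _ => Finset.sum_nonneg fun x1 _ => joint_nonneg d s u v x1 x2 y)
    (total_one d)

lemma tilt_iVX2S (d : AuxP ch) (l : ℝ) (hl0 : 0 ≤ l) (hl1 : l ≤ 1) :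
    (tilt d l hl0 hl1).iVX2S = l * d.iVX2S := by
  have e : ∀ s : S, (∑ x2, ∑ u, ∑ v, ∑ x1, ∑ y, d.joint s u v x1 x2 y)
      = ∑ v, ∑ x2, ∑ u, ∑ x1, ∑ y, d.joint s u v x1 x2 y :=
    fun s => (mv3 fun v x2 u => ∑ x1, ∑ y, d.joint s u v x1 x2 y).symm
  have hc : ∀ b : Option d.V × X2, 0 ≤ (b.1.elim (1 - l) fun _ => l : ℝ) := by
    rintro ⟨o, x2⟩
    cases o with
    | none => simpa using sub_nonneg.mpr hl1
    | some v0 => simpa using hl0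
  have hp : ∀ (b : Option d.V × X2) (s : S),
      (∑ u : d.U × d.V, ∑ x1, ∑ y, (tilt d l hl0 hl1).joint s u b.1 x1 b.2 y)
        = (b.1.elim (1 - l) fun _ => l) *
            (b.1.elim (∑ u, ∑ v, ∑ x1, ∑ y, d.joint s u v x1 b.2 y)
              (fun v0 => ∑ u, ∑ x1, ∑ y, d.joint s u v0 x1 b.2 y)) := by
    rintro ⟨o, x2⟩ s
    cases o with
    | none =>
      simp only [Fintype.sum_prod_type, tilt_joint_none, Option.elim_none, ← Finset.mul_sum]
    | some v0 =>
      simp only [Fintype.sum_prod_type, tilt_joint_some, Option.elim_some, sum_ite_const,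
        Finset.sum_ite_eq', Finset.mem_univ, if_true, ← Finset.mul_sum]
  have hcol : ∀ s : S,
      (∑ b : Option d.V × X2,
          ∑ u : d.U × d.V, ∑ x1, ∑ y, (tilt d l hl0 hl1).joint s u b.1 x1 b.2 y)
        = ∑ b : d.V × X2, ∑ u, ∑ x1, ∑ y, d.joint s u b.1 x1 b.2 y := by
    intro s
    simp only [hp]
    simp only [Fintype.sum_prod_type, Fintype.sum_option, Option.elim_none, Option.elim_some]
    simp only [← Finset.mul_sum]
    rw [e s]
    ring
  rw [show (tilt d l hl0 hl1).iVX2S = mi (fun (b : Option d.V × X2) (s : S) =>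
        ∑ u : d.U × d.V, ∑ x1, ∑ y, (tilt d l hl0 hl1).joint s u b.1 x1 b.2 y) from rfl,
      show d.iVX2S = mi (fun (b : d.V × X2) (s : S) =>
        ∑ u, ∑ x1, ∑ y, d.joint s u b.1 x1 b.2 y) from rfl,
      mi_scale (fun (b : Option d.V × X2) (s : S) =>
          b.1.elim (∑ u, ∑ v, ∑ x1, ∑ y, d.joint s u v x1 b.2 y)
            (fun v0 => ∑ u, ∑ x1, ∑ y, d.joint s u v0 x1 b.2 y))
        (fun (b : Option d.V × X2) (s : S) =>
          ∑ u : d.U × d.V, ∑ x1, ∑ y, (tilt d l hl0 hl1).joint s u b.1 x1 b.2 y)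
        (fun b => b)
        (fun b => b.1.elim (1 - l) fun _ => l)
        (fun s => ∑ b : d.V × X2, ∑ u, ∑ x1, ∑ y, d.joint s u b.1 x1 b.2 y)
        hc hp hcol]
  have hz := iX2S_zero d
  simp only [mi] at hz
  simp only [e] at hz
  simp only [mi, Fintype.sum_prod_type, Fintype.sum_option, Option.elim_none, Option.elim_some]
  simp only [← Finset.mul_sum]
  rw [hz]
  ring

lemma chainY (d : AuxP ch) : d.iUVX2Y = d.iVX2Y + d.iUY_VX2 := by
  have h : mi (fun (ac : d.U × d.V × X2) (y : Y) =>
        ∑ s, ∑ x1, d.joint s ac.1 ac.2.1 x1 ac.2.2 y)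
      = mi (fun (c : d.V × X2) (y : Y) => ∑ u, ∑ s, ∑ x1, d.joint s u c.1 x1 c.2 y)
        + cmi (fun (u : d.U) (y : Y) (c : d.V × X2) => ∑ s, ∑ x1, d.joint s u c.1 x1 c.2 y) :=
    mi_chain (fun (u : d.U) (y : Y) (c : d.V × X2) => ∑ s, ∑ x1, d.joint s u c.1 x1 c.2 y)
      (fun u y c => Finset.sum_nonneg fun s _ => Finset.sum_nonneg fun x1 _ =>
        joint_nonneg d s u c.1 x1 c.2 y)
  have em : (fun (c : d.V × X2) (y : Y) => ∑ u, ∑ s, ∑ x1, d.joint s u c.1 x1 c.2 y)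
      = fun (c : d.V × X2) (y : Y) => ∑ s, ∑ u, ∑ x1, d.joint s u c.1 x1 c.2 y := by
    funext c y
    exact Finset.sum_comm
  rw [em] at h
  exact h

lemma chainS (d : AuxP ch) : d.iUVX2S = d.iVX2S + d.iUS_VX2 := by
  have h : mi (fun (ac : d.U × d.V × X2) (s : S) =>
        ∑ x1, ∑ y, d.joint s ac.1 ac.2.1 x1 ac.2.2 y)
      = mi (fun (c : d.V × X2) (s : S) => ∑ u, ∑ x1, ∑ y, d.joint s u c.1 x1 c.2 y)
        + cmi (fun (u : d.U) (s : S) (c : d.V × X2) => ∑ x1, ∑ y, d.joint s u c.1 x1 c.2 y) :=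
    mi_chain (fun (u : d.U) (s : S) (c : d.V × X2) => ∑ x1, ∑ y, d.joint s u c.1 x1 c.2 y)
      (fun u s c => Finset.sum_nonneg fun x1 _ => Finset.sum_nonneg fun y _ =>
        joint_nonneg d s u c.1 x1 c.2 y)
  exact h

end Aux

/-- Adding the constraint `I(V,X₂;Y) − I(V,X₂;S) ≥ 0` does not change the set 𝒞. -/
theorem regionC_constraint_superfluous {S X1 X2 Y : Type}
    [Fintype S] [Fintype X1] [Fintype X2] [Fintype Y] (ch : DMMAC S X1 X2 Y) :
    regionC ch =
      {r : ℝ × ℝ | 0 ≤ r.1 ∧ 0 ≤ r.2 ∧ ∃ d : AuxP ch,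
        0 ≤ d.iVX2Y - d.iVX2S ∧
        r.2 ≤ d.iUY_VX2 - d.iUS_VX2 ∧ r.1 + r.2 ≤ d.iUVX2Y - d.iUVX2S} := by
  ext r
  simp only [regionC, Set.mem_setOf_eq]
  constructor
  · rintro ⟨h1, h2, d, hR1, hsum⟩
    refine ⟨h1, h2, ?_⟩
    by_cases hf : 0 ≤ d.iVX2Y - d.iVX2S
    · exact ⟨d, hf, hR1, hsum⟩
    · push_neg at hf
      have hc0 : 0 ≤ d.iX2Y := iX2Y_nonneg d
      have hden : (0:ℝ) < d.iX2Y - (d.iVX2Y - d.iVX2S) := by linarith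
      have hl0 : 0 ≤ d.iX2Y / (d.iX2Y - (d.iVX2Y - d.iVX2S)) := div_nonneg hc0 hden.le
      have hl1 : d.iX2Y / (d.iX2Y - (d.iVX2Y - d.iVX2S)) ≤ 1 := by
        rw [div_le_one hden]; linarith
      have e0 : (tilt d _ hl0 hl1).iVX2Y - (tilt d _ hl0 hl1).iVX2S = 0 := by
        rw [tilt_iVX2Y d _ hl0 hl1, tilt_iVX2S d _ hl0 hl1]
        field_simp
        ring
      have b1 := tilt_iUVX2Y d _ hl0 hl1
      have b2 := tilt_iUVX2S d _ hl0 hl1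
      have c1 := chainY (tilt d _ hl0 hl1)
      have c2 := chainS (tilt d _ hl0 hl1)
      have c1' := chainY d
      have c2' := chainS d
      refine ⟨tilt d _ hl0 hl1, by rw [e0], by linarith, by linarith⟩
  · rintro ⟨h1, h2, d, _, hR1, hsum⟩
    exact ⟨h1, h2, d, hR1, hsum⟩

end
end
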